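/- arXiv:2312.05542 — 11 statements merged into one kernel-verified Lean document; each statement's English description precedes it below -/
import Mathlib

section
/- Let l be an affine line in the Euclidean plane ℝ², P a point on l, and F a point not on l. Let F_mr be the reflection of F across l (so F_mr ≠ P). Let F₁ be any point with F₁ ≠ P, and let F₂ be the reflection of F₁ across the line m through P and F_mr. Then: (i) dist(P,F₂) = dist(P,F₁); (ii) dist(F_mr,F₂) = dist(F_mr,F₁); and (iii) setting n₁ = (P−F)/‖P−F‖ + (P−F₁)/‖P−F₁‖, n₂ = (P−F)/‖P−F‖ + (P−F₂)/‖P−F₂‖, and n₁' = (reflection of the point P + n₁ across l) − P, the vectors n₁' and n₂ are linearly dependent. (n₁, resp. n₂, is a normal vector at P of the ellipse through P with foci F,F₁, resp. F,F₂, of the same major-axis length dist(P,F)+dist(P,F₁); so (iii) says the reflection across l carries the tangent line at P of the incoming Kepler flight ellipse to the tangent line at P of the outgoing one. This is the Gallavotti–Jauslin theorem: under elastic reflection of a Kepler orbit at the line l, the new second focus F₂ lies on the circle centered at F_mr of radius dist(F_mr,F₁).) -/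
/-!
Translate so that `P` is the origin. The reflection across `l` becomes the linear reflection `S`
in the line `l.direction`, the line `m` gets direction `S u`, where `u` is the unit vector
along `P - F`, and with `v` the unit vector along `P - F₁` the two normals become
`n₁' = S (u + v)` and `n₂ = u + R v`, `R` being the reflection in `ℝ ∙ S u`. Identifying the
plane with `ℂ` and taking `‖k‖ = 1` with `l.direction = ℝ ∙ k`, the reflections are
`x ↦ k² x̄` and `x ↦ (k² ū)² x̄`, and `conj n₁' * n₂ = z + z̄ + w + w̄` with `z = (k̄ u)²` and
`w = k̄² u v` is real, so `n₁'` and `n₂` are parallel.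
-/

open ComplexConjugate Module

namespace Complex

theorem reflection_span_singleton_of_norm_eq_one {k : ℂ} (hk : ‖k‖ = 1) (z : ℂ) :
    (ℝ ∙ k).reflection z = k ^ 2 * conj z := by
  have hk0 : k ≠ 0 := norm_ne_zero_iff.mp (by rw [hk]; norm_num)
  have hre : ((z * conj k).re : ℂ) = (z * conj k + conj (z * conj k)) / 2 := by
    rw [add_conj]; push_cast; ring
  rw [Submodule.reflection_singleton_apply, hk, Complex.inner, two_smul, ← add_smul, real_smul]
  push_cast
  rw [hre, map_mul, conj_conj, ← inv_eq_conj hk]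
  field_simp
  ring

theorem not_linearIndependent_pair_of_im_conj_mul_eq_zero {a b : ℂ} (h : (conj a * b).im = 0) :
    ¬ LinearIndependent ℝ ![a, b] := by
  rw [LinearIndependent.pair_iff]
  intro hab
  have hba : (conj a * b).re • a + (-normSq a) • b = 0 := by
    rw [real_smul, real_smul, ofReal_neg, normSq_eq_conj_mul_self,
      conj_eq_iff_re.mp (conj_eq_iff_im.mpr h)]
    ring
  have ha : a = 0 := normSq_eq_zero.mp (neg_eq_zero.mp (hab _ _ hba).2)
  simpa using hab 1 0 (by simp [ha])

theorem not_linearIndependent_reflection_add_add_reflection {k u v : ℂ} (hk : ‖k‖ = 1)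
    (hu : ‖u‖ = 1) (hv : ‖v‖ = 1) :
    ¬ LinearIndependent ℝ
      ![(ℝ ∙ k).reflection (u + v), u + (ℝ ∙ (ℝ ∙ k).reflection u).reflection v] := by
  have hku : ‖(ℝ ∙ k).reflection u‖ = 1 := by rw [LinearIsometryEquiv.norm_map, hu]
  rw [reflection_span_singleton_of_norm_eq_one hku, reflection_span_singleton_of_norm_eq_one hk,
    reflection_span_singleton_of_norm_eq_one hk]
  apply not_linearIndependent_pair_of_im_conj_mul_eq_zero
  set z := conj k ^ 2 * u ^ 2
  set w := conj k ^ 2 * u * v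
  have hk0 : k ≠ 0 := norm_ne_zero_iff.mp (by rw [hk]; norm_num)
  have hu0 : u ≠ 0 := norm_ne_zero_iff.mp (by rw [hu]; norm_num)
  have hv0 : v ≠ 0 := norm_ne_zero_iff.mp (by rw [hv]; norm_num)
  have hreal : conj (k ^ 2 * conj (u + v)) * (u + (k ^ 2 * conj u) ^ 2 * conj v)
      = (z + conj z) + (w + conj w) := by
    simp only [z, w, map_mul, map_add, map_pow, conj_conj]
    rw [← inv_eq_conj hk, ← inv_eq_conj hu, ← inv_eq_conj hv]
    field_simp
    ring
  rw [hreal, add_conj, add_conj]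
  simp

end Complex

section InnerProductSpace

variable {V : Type*} [NormedAddCommGroup V] [InnerProductSpace ℝ V]

theorem Submodule.exists_norm_eq_one_and_eq_span_singleton {K : Submodule ℝ V}
    (hK : finrank ℝ K = 1) : ∃ k : V, ‖k‖ = 1 ∧ K = ℝ ∙ k := by
  have hK0 : K ≠ ⊥ := fun h => by rw [h, finrank_bot] at hK; exact zero_ne_one hK
  obtain ⟨w, hwK, hw0⟩ := (Submodule.ne_bot_iff K).mp hK0
  exact ⟨‖w‖⁻¹ • w, norm_smul_inv_norm hw0,
    eq_span_singleton_of_mem_of_finrank_eq_one hK (K.smul_mem _ hwK) (by simp [hw0])⟩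

theorem LinearIsometryEquiv.map_reflection_span_singleton {W : Type*} [NormedAddCommGroup W]
    [InnerProductSpace ℝ W] (f : V ≃ₗᵢ[ℝ] W) (k x : V) :
    f ((ℝ ∙ k).reflection x) = (ℝ ∙ f k).reflection (f x) := by
  have hmap : (ℝ ∙ k).map (f.toLinearEquiv : V →ₗ[ℝ] W) = ℝ ∙ f k := by
    rw [Submodule.map_span, Set.image_singleton]; rfl
  simpa [hmap] using (Submodule.reflection_map_apply f (ℝ ∙ k) (f x)).symm

theorem not_linearIndependent_reflection_add_add_reflection [Fact (finrank ℝ V = 2)]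
    {K : Submodule ℝ V} [K.HasOrthogonalProjection] (hK : finrank ℝ K = 1) {u v : V}
    (hu : ‖u‖ = 1) (hv : ‖v‖ = 1) :
    ¬ LinearIndependent ℝ ![K.reflection (u + v), u + (ℝ ∙ K.reflection u).reflection v] := by
  obtain ⟨k, hk, rfl⟩ := Submodule.exists_norm_eq_one_and_eq_span_singleton hK
  have : FiniteDimensional ℝ V := .of_fact_finrank_eq_two
  let f : V ≃ₗᵢ[ℝ] ℂ := (stdOrthonormalBasis ℝ V).equiv Complex.orthonormalBasisOneI
    (finCongr Fact.out)
  intro hli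
  refine Complex.not_linearIndependent_reflection_add_add_reflection (k := f k) (u := f u)
    (v := f v) (by simpa using hk) (by simpa using hu) (by simpa using hv) ?_
  have hf := hli.map' f.toLinearEquiv.toLinearMap f.toLinearEquiv.ker
  have hcomp : ∀ x y : V, ⇑(f.toLinearEquiv : V →ₗ[ℝ] ℂ) ∘ ![x, y] = ![f x, f y] := by
    intro x y; ext i; fin_cases i <;> rfl
  rw [hcomp] at hf
  simpa [f.map_reflection_span_singleton] using hf

end InnerProductSpace

namespace EuclideanGeometry

variable {𝕜 V P : Type*} [RCLike 𝕜] [NormedAddCommGroup V] [InnerProductSpace 𝕜 V]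
  [MetricSpace P] [NormedAddTorsor V P]

theorem reflection_vsub_of_mem (s : AffineSubspace 𝕜 P) [Nonempty s]
    [s.direction.HasOrthogonalProjection] {p : P} (hp : p ∈ s) (x : P) :
    reflection s x -ᵥ p = s.direction.reflection (x -ᵥ p) := by
  rw [reflection_apply_of_mem s x hp, vadd_vsub]

theorem vsub_reflection_of_mem (s : AffineSubspace 𝕜 P) [Nonempty s]
    [s.direction.HasOrthogonalProjection] {p : P} (hp : p ∈ s) (x : P) :
    p -ᵥ reflection s x = s.direction.reflection (p -ᵥ x) := by
  rw [← neg_vsub_eq_vsub_rev, reflection_vsub_of_mem s hp, ← map_neg, neg_vsub_eq_vsub_rev]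

end EuclideanGeometry

open EuclideanGeometry in
/-- **Gallavotti–Jauslin theorem (reflection of a Kepler flight ellipse at a line).**
Let `l` be an affine line in the Euclidean plane, `P ∈ l`, `F ∉ l`, let `Fmr` be the
reflection of `F` across `l` (so `Fmr ≠ P`).  Let `F₁ ≠ P` and let `F₂` be the reflection
of `F₁` across the line `m` through `P` and `Fmr`.  Then `dist P F₂ = dist P F₁`,
`dist Fmr F₂ = dist Fmr F₁`, and the reflection across `l` carries the tangent line at `P`
of the ellipse with foci `F, F₁` to the tangent line at `P` of the ellipse with foci
`F, F₂` (tangent lines being perpendicular to the stated normal vectors). -/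
theorem gallavotti_jauslin
    (l : AffineSubspace ℝ (EuclideanSpace ℝ (Fin 2))) [Nonempty l]

    (hl : Module.finrank ℝ l.direction = 1)
    (P F : EuclideanSpace ℝ (Fin 2)) (hP : P ∈ l) (hF : F ∉ l)
    (Fmr : EuclideanSpace ℝ (Fin 2)) (hFmr : Fmr = EuclideanGeometry.reflection l F)
    (F₁ : EuclideanSpace ℝ (Fin 2)) (hF₁ : F₁ ≠ P)
    (F₂ : EuclideanSpace ℝ (Fin 2))
    (hF₂ : F₂ = EuclideanGeometry.reflection
      (affineSpan ℝ ({P, Fmr} : Set (EuclideanSpace ℝ (Fin 2)))) F₁)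
    (n₁ n₂ n₁' : EuclideanSpace ℝ (Fin 2))
    (hn₁ : n₁ = ‖P - F‖⁻¹ • (P - F) + ‖P - F₁‖⁻¹ • (P - F₁))
    (hn₂ : n₂ = ‖P - F‖⁻¹ • (P - F) + ‖P - F₂‖⁻¹ • (P - F₂))
    (hn₁' : n₁' = EuclideanGeometry.reflection l (P + n₁) - P) :
    Fmr ≠ P ∧
    dist P F₂ = dist P F₁ ∧
    dist Fmr F₂ = dist Fmr F₁ ∧
    ¬ LinearIndependent ℝ ![n₁', n₂] := by
  have hFP : F ≠ P := fun h => hF (h ▸ hP)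
  have hFmrP : Fmr ≠ P := by
    rw [hFmr, ← (reflection_eq_self_iff P).mpr hP]
    exact (reflection l).injective.ne hFP
  set m := affineSpan ℝ ({P, Fmr} : Set (EuclideanSpace ℝ (Fin 2)))
  have hPm : P ∈ m := mem_affineSpan ℝ (Set.mem_insert _ _)
  have hFmrm : Fmr ∈ m := mem_affineSpan ℝ (by simp)
  have hPF₂ : dist P F₂ = dist P F₁ := hF₂ ▸ dist_reflection_eq_of_mem _ hPm _
  refine ⟨hFmrP, hPF₂, hF₂ ▸ dist_reflection_eq_of_mem _ hFmrm _, ?_⟩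
  have : Fact (finrank ℝ (EuclideanSpace ℝ (Fin 2)) = 2) := ⟨finrank_euclideanSpace_fin⟩
  set u := ‖P - F‖⁻¹ • (P - F)
  set v := ‖P - F₁‖⁻¹ • (P - F₁)
  have hm : m.direction = ℝ ∙ l.direction.reflection u := by
    rw [direction_affineSpan, vectorSpan_pair, hFmr, vsub_reflection_of_mem l hP, vsub_eq_sub,
      map_smul, Submodule.span_singleton_smul_eq (by simpa [sub_eq_zero] using hFP.symm)]
  have hv₂ : ‖P - F₂‖⁻¹ • (P - F₂) = (ℝ ∙ l.direction.reflection u).reflection v := by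
    have hsub : P - F₂ = m.direction.reflection (P - F₁) := hF₂ ▸ vsub_reflection_of_mem m hPm F₁
    rw [← dist_eq_norm, hPF₂, dist_eq_norm, hsub, ← map_smul]
    simp only [hm, v]
  have hn₁'S : n₁' = l.direction.reflection n₁ := by
    simpa [← hn₁'] using reflection_vsub_of_mem l hP (P + n₁)
  rw [hn₁'S, hn₁, hn₂, hv₂]
  exact not_linearIndependent_reflection_add_add_reflection hl
    (norm_smul_inv_norm (sub_ne_zero.mpr hFP.symm)) (norm_smul_inv_norm (sub_ne_zero.mpr hF₁.symm))
end

section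
/- Let F, F' ∈ ℝ² and A ∈ ℝ with 2A > dist(F,F'), and let P satisfy dist(P,F) + dist(P,F') = 2A (P lies on the ellipse with foci F, F' and semi-major axis A). Then P ≠ F, P ≠ F', the vector n = (P−F)/‖P−F‖ + (P−F')/‖P−F'‖ is nonzero, and, letting l be the line through P perpendicular to n (the tangent line of the ellipse at P) and F_P the reflection of F across l, one has F_P = F' + (2A/dist(P,F'))·(P − F'). In particular dist(F', F_P) = 2A and F_P lies on the ray from F' through P (the optical property of the ellipse used in the construction of consecutive foci). -/
/-!
The unit vectors `u, u'` pointing from `F, F'` to `P` have equal length, so the normal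
`n = u + u'` satisfies `‖n‖² = 2⟪u, n⟫`. Hence reflecting across the line through `P` orthogonal
to `n` sends `F = P - ‖P - F‖ • u` to `F + ‖P - F‖ • n = P + ‖P - F‖ • u'`, the point of the ray
from `F'` through `P` at distance `‖P - F‖ + ‖P - F'‖ = 2A` from `F'`.
-/

open RealInnerProductSpace

/-- The line through `P` perpendicular to the vector `n` (for `n ≠ 0` this is the tangent
line at `P` of an ellipse with normal vector `n` at `P`). -/
noncomputable def perpLineAt (P n : EuclideanSpace ℝ (Fin 2)) :
    AffineSubspace ℝ (EuclideanSpace ℝ (Fin 2)) :=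
  AffineSubspace.mk' P (ℝ ∙ n)ᗮ

instance (P n : EuclideanSpace ℝ (Fin 2)) : Nonempty (perpLineAt P n) :=
  (AffineSubspace.mk'_nonempty P (ℝ ∙ n)ᗮ).to_subtype

theorem EuclideanGeometry.reflection_mk'_orthogonal_span_singleton
    {V P : Type*} [NormedAddCommGroup V] [InnerProductSpace ℝ V] [MetricSpace P]
    [NormedAddTorsor V P] (p : P) (n : V) [Nonempty (AffineSubspace.mk' p (ℝ ∙ n)ᗮ)]
    [(AffineSubspace.mk' p (ℝ ∙ n)ᗮ).direction.HasOrthogonalProjection] (x : P) :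
    reflection (AffineSubspace.mk' p (ℝ ∙ n)ᗮ) x
      = (x -ᵥ p - (2 * ⟪n, x -ᵥ p⟫ / ‖n‖ ^ 2) • n) +ᵥ p := by
  rw [reflection_apply_of_mem _ x (AffineSubspace.self_mem_mk' p _)]
  simp only [AffineSubspace.direction_mk', Submodule.reflection_orthogonal,
    LinearIsometryEquiv.trans_apply, Submodule.reflection_apply, Submodule.starProjection_singleton,
    LinearIsometryEquiv.coe_neg, RCLike.ofReal_real_eq_id, id]
  congr 1
  module

theorem ne_of_dist_lt_dist_add_dist {X : Type*} [PseudoMetricSpace X] {p a b : X}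
    (h : dist a b < dist p a + dist p b) : p ≠ a ∧ p ≠ b := by
  constructor <;> rintro rfl
  · simp at h
  · simp [dist_comm] at h

theorem inv_norm_smul_add_inv_norm_smul_ne_zero {E : Type*} [NormedAddCommGroup E]
    [NormedSpace ℝ E] {x y : E} (h : ‖x - y‖ < ‖x‖ + ‖y‖) : ‖x‖⁻¹ • x + ‖y‖⁻¹ • y ≠ 0 := by
  intro h0
  have hray : SameRay ℝ x (-y) := by
    rw [sameRay_iff_inv_norm_smul_eq, norm_neg, smul_neg]
    exact .inr (.inr (eq_neg_of_add_eq_zero_left h0))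
  have hnorm := hray.norm_add
  rw [← sub_eq_add_neg, norm_neg] at hnorm
  exact h.ne hnorm

section InnerProductSpace

variable {E : Type*} [NormedAddCommGroup E] [InnerProductSpace ℝ E]

theorem norm_add_sq_eq_two_mul_inner_of_norm_eq {u v : E} (h : ‖u‖ = ‖v‖) :
    ‖u + v‖ ^ 2 = 2 * ⟪u, u + v⟫ := by
  rw [norm_add_sq_real, inner_add_right, real_inner_self_eq_norm_sq, ← h]
  ring

theorem two_mul_inner_div_norm_sq_eq_norm_of_eq_inv_norm_smul_add {x y n : E} (hx : x ≠ 0)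
    (hy : y ≠ 0) (hn : n = ‖x‖⁻¹ • x + ‖y‖⁻¹ • y) (hn0 : n ≠ 0) :
    2 * ⟪n, x⟫ / ‖n‖ ^ 2 = ‖x‖ := by
  have hunit : ‖‖x‖⁻¹ • x‖ = ‖‖y‖⁻¹ • y‖ := by
    simp [norm_smul, hx, hy]
  have hsq := norm_add_sq_eq_two_mul_inner_of_norm_eq hunit
  rw [← hn, real_inner_smul_left, real_inner_comm] at hsq
  have hx0 : ‖x‖ ≠ 0 := norm_ne_zero_iff.mpr hx
  have hn0' : ‖n‖ ^ 2 ≠ 0 := by positivity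
  field_simp
  rw [hsq]
  field_simp

theorem reflection_mk'_orthogonal_inv_norm_smul_add {P F F' n : E} (hPF : P ≠ F) (hPF' : P ≠ F')
    (hn : n = ‖P - F‖⁻¹ • (P - F) + ‖P - F'‖⁻¹ • (P - F')) (hn0 : n ≠ 0)
    [Nonempty (AffineSubspace.mk' P (ℝ ∙ n)ᗮ)]
    [(AffineSubspace.mk' P (ℝ ∙ n)ᗮ).direction.HasOrthogonalProjection] :
    EuclideanGeometry.reflection (AffineSubspace.mk' P (ℝ ∙ n)ᗮ) F
      = P + (‖P - F‖ / ‖P - F'‖) • (P - F') := by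
  have hcoeff := two_mul_inner_div_norm_sq_eq_norm_of_eq_inv_norm_smul_add
    (sub_ne_zero.mpr hPF) (sub_ne_zero.mpr hPF') hn hn0
  have hr : ‖P - F‖ ≠ 0 := norm_ne_zero_iff.mpr (sub_ne_zero.mpr hPF)
  have hr' : ‖P - F'‖ ≠ 0 := norm_ne_zero_iff.mpr (sub_ne_zero.mpr hPF')
  rw [EuclideanGeometry.reflection_mk'_orthogonal_span_singleton, vsub_eq_sub, vadd_eq_add,
    ← neg_sub P F, inner_neg_right, mul_neg, neg_div, hcoeff, hn]
  match_scalars <;> field_simp <;> ring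

end InnerProductSpace

/-- **Optical property of the ellipse.** If `P` lies on the ellipse with foci `F, F'` and
semi-major axis `A` (with `2A > dist F F'`), then `P ≠ F`, `P ≠ F'`, the normal vector
`n = (P−F)/‖P−F‖ + (P−F')/‖P−F'‖` is nonzero, and the reflection `F_P` of `F` across the
tangent line of the ellipse at `P` (the line through `P` perpendicular to `n`) is
`F' + (2A / dist P F') • (P − F')`; in particular `dist F' F_P = 2A` and `F_P` lies on the
ray from `F'` through `P`. -/
theorem optical_property_ellipse
    (F F' P : EuclideanSpace ℝ (Fin 2)) (A : ℝ)
    (hA : 2 * A > dist F F') (hP : dist P F + dist P F' = 2 * A)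
    (n : EuclideanSpace ℝ (Fin 2))
    (hn : n = ‖P - F‖⁻¹ • (P - F) + ‖P - F'‖⁻¹ • (P - F')) :
    P ≠ F ∧ P ≠ F' ∧ n ≠ 0 ∧
    EuclideanGeometry.reflection (perpLineAt P n) F
      = F' + (2 * A / dist P F') • (P - F') ∧
    dist F' (EuclideanGeometry.reflection (perpLineAt P n) F) = 2 * A := by
  rw [← hP] at hA ⊢
  obtain ⟨hPF, hPF'⟩ := ne_of_dist_lt_dist_add_dist hA
  have hn0 : n ≠ 0 := by
    rw [hn]
    apply inv_norm_smul_add_inv_norm_smul_ne_zero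
    simpa [dist_eq_norm, norm_sub_rev F'] using hA
  have hrefl : EuclideanGeometry.reflection (perpLineAt P n) F
      = F' + ((dist P F + dist P F') / dist P F') • (P - F') := by
    have hr' : dist P F' ≠ 0 := dist_ne_zero.mpr hPF'
    rw [show EuclideanGeometry.reflection (perpLineAt P n) F = _ from
      reflection_mk'_orthogonal_inv_norm_smul_add hPF hPF' hn hn0]
    simp only [← dist_eq_norm]
    match_scalars <;> field_simp <;> ring
  refine ⟨hPF, hPF', hn0, hrefl, ?_⟩
  rw [hrefl, dist_self_add_right, norm_smul, ← dist_eq_norm, Real.norm_of_nonneg (by positivity),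
    div_mul_cancel₀ _ (dist_ne_zero.mpr hPF')]
end

section
/- Let F, F' ∈ ℝ² with F ≠ F' and A_K with 2A_K > dist(F,F'), and let P lie on the boundary ellipse B = {z : dist(z,F) + dist(z,F') = 2A_K} (so P ≠ F, P ≠ F'). Let t be the tangent line of B at P, i.e. the line through P perpendicular to N = (P−F)/‖P−F‖ + (P−F')/‖P−F'‖. Let F_i ∈ ℝ² with F_i ≠ P, and let F_{i+1} be the reflection of F_i across the line through P and F'. Then: (i) dist(F', F_{i+1}) = dist(F', F_i); (ii) dist(P, F_{i+1}) = dist(P, F_i); and (iii) setting n₁ = (P−F)/‖P−F‖ + (P−F_i)/‖P−F_i‖, n₂ = (P−F)/‖P−F‖ + (P−F_{i+1})/‖P−F_{i+1}‖, and n₁' = (reflection of the point P + n₁ across t) − P, the vectors n₁' and n₂ are linearly dependent. (So reflecting the second focus across the line PF' implements elastic reflection of the Kepler flight ellipse at the conic boundary B, and all consecutive second foci lie on the circle centered at the second focus F' of B with radius dist(F',F_i): the foci circle of the Kepler billiard.) -/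
open EuclideanGeometry ComplexConjugate Module

namespace Complex

theorem reflection_span_singleton_apply {n : ℂ} (hn : n ≠ 0) (z : ℂ) :
    (ℝ ∙ n).reflection z = n / conj n * conj z := by
  have hc : conj n ≠ 0 := (map_ne_zero conj).mpr hn
  have hnorm : ((‖n‖ ^ 2 : ℝ) : ℂ) = n * conj n := by rw [← normSq_eq_norm_sq, mul_conj]
  rw [Submodule.reflection_singleton_apply, Complex.inner]
  simp only [RCLike.ofReal_real_eq_id, id, nsmul_eq_mul, real_smul, ofReal_div, hnorm,
    re_eq_add_conj, map_mul, conj_conj]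
  field_simp
  ring

theorem not_linearIndependent_of_mul_conj_im_eq_zero {z w : ℂ} (h : (z * conj w).im = 0) :
    ¬ LinearIndependent ℝ ![z, w] := by
  intro hli
  have hw : w ≠ 0 := by simpa using hli.ne_zero 1
  refine (normSq_pos.mpr hw).ne' (LinearIndependent.pair_iff.mp hli _ (-(z * conj w).re) ?_).1
  have hre : ((z * conj w).re : ℂ) = z * conj w := Complex.ext (by simp) (by simp [h])
  rw [real_smul, real_smul, ← mul_conj, ofReal_neg, hre]
  ring

theorem not_linearIndependent_reflection_bisector {u v w : ℂ} (hu : ‖u‖ = 1) (hv : ‖v‖ = 1)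
    (hw : ‖w‖ = 1) (huv : u + v ≠ 0) :
    ¬ LinearIndependent ℝ ![(ℝ ∙ (u + v))ᗮ.reflection (u + w), u + (ℝ ∙ v).reflection w] := by
  have hu0 : u ≠ 0 := norm_ne_zero_iff.mp (by simp [hu])
  have hv0 : v ≠ 0 := norm_ne_zero_iff.mp (by simp [hv])
  have hw0 : w ≠ 0 := norm_ne_zero_iff.mp (by simp [hw])
  have hvu : v + u ≠ 0 := by rwa [add_comm]
  apply not_linearIndependent_of_mul_conj_im_eq_zero
  have hreal : (ℝ ∙ (u + v))ᗮ.reflection (u + w) * conj (u + (ℝ ∙ v).reflection w)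
      = -((2 * (v * conj u).re + 2 * (w * conj v).re : ℝ) : ℂ) := by
    rw [Submodule.reflection_orthogonal_apply, reflection_span_singleton_apply huv,
      reflection_span_singleton_apply hv0]
    push_cast
    simp only [re_eq_add_conj, map_add, map_mul, map_div₀, conj_conj]
    rw [← inv_eq_conj hu, ← inv_eq_conj hv, ← inv_eq_conj hw]
    field_simp
    ring
  rw [hreal, neg_im, ofReal_im, neg_zero]

end Complex

section InnerProductSpace

variable {E F : Type*} [NormedAddCommGroup E] [InnerProductSpace ℝ E]
  [NormedAddCommGroup F] [InnerProductSpace ℝ F]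

theorem LinearIsometryEquiv.map_reflection_span_singleton_s2 (f : E ≃ₗᵢ[ℝ] F) (a x : E) :
    f ((ℝ ∙ a).reflection x) = (ℝ ∙ f a).reflection (f x) := by
  simp [Submodule.reflection_singleton_apply]

theorem not_linearIndependent_reflection_bisector (hE : finrank ℝ E = 2) {u v w : E}
    (hu : ‖u‖ = 1) (hv : ‖v‖ = 1) (hw : ‖w‖ = 1) (huv : u + v ≠ 0) :
    ¬ LinearIndependent ℝ ![(ℝ ∙ (u + v))ᗮ.reflection (u + w), u + (ℝ ∙ v).reflection w] := by
  have : FiniteDimensional ℝ E := .of_finrank_eq_succ hE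
  let f : E ≃ₗᵢ[ℝ] ℂ :=
    (Complex.isometryOfOrthonormal ((stdOrthonormalBasis ℝ E).reindex (finCongr hE))).symm
  have hmap : f ∘ ![(ℝ ∙ (u + v))ᗮ.reflection (u + w), u + (ℝ ∙ v).reflection w]
      = ![(ℝ ∙ (f u + f v))ᗮ.reflection (f u + f w), f u + (ℝ ∙ f v).reflection (f w)] := by
    ext i
    fin_cases i <;> simp [Submodule.reflection_orthogonal_apply, f.map_reflection_span_singleton_s2]
  intro hli
  refine Complex.not_linearIndependent_reflection_bisector (u := f u) (v := f v) (w := f w)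
    (by simpa) (by simpa) (by simpa) (by simpa [← map_add]) ?_
  exact hmap ▸ hli.map' f.toLinearMap f.toLinearEquiv.ker

theorem norm_sub_eq_norm_add_norm_of_inv_norm_smul_add_eq_zero {x y : E}
    (h : ‖x‖⁻¹ • x + ‖y‖⁻¹ • y = 0) : ‖x - y‖ = ‖x‖ + ‖y‖ := by
  have hray : SameRay ℝ x (-y) := by
    refine sameRay_iff_inv_norm_smul_eq.mpr (Or.inr (Or.inr ?_))
    rw [norm_neg, smul_neg, eq_neg_iff_add_eq_zero, h]
  simpa [sub_eq_add_neg] using hray.norm_add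

end InnerProductSpace

theorem EuclideanGeometry.reflection_apply_of_direction_eq {𝕜 V P : Type*} [RCLike 𝕜]
    [NormedAddCommGroup V] [InnerProductSpace 𝕜 V] [MetricSpace P] [NormedAddTorsor V P]
    {s : AffineSubspace 𝕜 P} [Nonempty s] [s.direction.HasOrthogonalProjection]
    {K : Submodule 𝕜 V} [K.HasOrthogonalProjection] (hK : s.direction = K) {p : P} (hp : p ∈ s)
    (x : P) : reflection s x = K.reflection (x -ᵥ p) +ᵥ p := by
  subst hK
  exact reflection_apply_of_mem s x hp

theorem kepler_foci_circle_general
    (F F' : EuclideanSpace ℝ (Fin 2)) (A_K : ℝ)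
    (hA : 2 * A_K > dist F F')
    (P : EuclideanSpace ℝ (Fin 2)) (hP : dist P F + dist P F' = 2 * A_K)
    (N : EuclideanSpace ℝ (Fin 2))
    (hN : N = ‖P - F‖⁻¹ • (P - F) + ‖P - F'‖⁻¹ • (P - F'))
    (F_i : EuclideanSpace ℝ (Fin 2)) (hFi : F_i ≠ P)
    (F_next : EuclideanSpace ℝ (Fin 2))
    (hFnext : F_next = EuclideanGeometry.reflection
      (affineSpan ℝ ({P, F'} : Set (EuclideanSpace ℝ (Fin 2)))) F_i)
    (n₁ n₂ n₁' : EuclideanSpace ℝ (Fin 2))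
    (hn₁ : n₁ = ‖P - F‖⁻¹ • (P - F) + ‖P - F_i‖⁻¹ • (P - F_i))
    (hn₂ : n₂ = ‖P - F‖⁻¹ • (P - F) + ‖P - F_next‖⁻¹ • (P - F_next))
    (hn₁' : n₁' = EuclideanGeometry.reflection (perpLineAt P N) (P + n₁) - P) :
    P ≠ F ∧ P ≠ F' ∧
    dist F' F_next = dist F' F_i ∧
    dist P F_next = dist P F_i ∧
    ¬ LinearIndependent ℝ ![n₁', n₂] := by
  have hlt : dist F F' < dist P F + dist P F' := hP ▸ hA
  have hPF : P ≠ F := by rintro rfl; simp at hlt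
  have hPF' : P ≠ F' := by rintro rfl; simp [dist_comm] at hlt
  refine ⟨hPF, hPF', ?_, ?_, ?_⟩
  · rw [hFnext, dist_reflection_eq_of_mem _ (right_mem_affineSpan_pair ℝ P F')]
  · rw [hFnext, dist_reflection_eq_of_mem _ (left_mem_affineSpan_pair ℝ P F')]
  set u := ‖P - F‖⁻¹ • (P - F)
  set v := ‖P - F'‖⁻¹ • (P - F')
  set w := ‖P - F_i‖⁻¹ • (P - F_i)
  have huv : u + v ≠ 0 := fun h ↦ by
    have := norm_sub_eq_norm_add_norm_of_inv_norm_smul_add_eq_zero h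
    rw [sub_sub_sub_cancel_left, ← dist_eq_norm, ← dist_eq_norm, ← dist_eq_norm] at this
    exact hlt.ne (by rwa [dist_comm F])
  have hn₁'_eq : n₁' = (ℝ ∙ (u + v))ᗮ.reflection (u + w) := by
    rw [hn₁', reflection_apply_of_direction_eq (s := perpLineAt P N)
      (AffineSubspace.direction_mk' P _) (AffineSubspace.self_mem_mk' P _), hN, hn₁]
    simp
  have hline : (affineSpan ℝ ({P, F'} : Set (EuclideanSpace ℝ (Fin 2)))).direction = ℝ ∙ v := by
    rw [direction_affineSpan, vectorSpan_pair, Submodule.span_singleton_smul_eq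
      (IsUnit.mk0 _ (inv_ne_zero (norm_ne_zero_iff.mpr (sub_ne_zero.mpr hPF')))), vsub_eq_sub]
  have hFnext_sub : P - F_next = (ℝ ∙ v).reflection (P - F_i) := by
    rw [hFnext, reflection_apply_of_direction_eq hline (left_mem_affineSpan_pair ℝ P F'),
      vadd_eq_add, vsub_eq_sub, sub_add_cancel_right, ← map_neg, neg_sub]
  have hn₂_eq : n₂ = u + (ℝ ∙ v).reflection w := by
    rw [hn₂, hFnext_sub, LinearIsometryEquiv.norm_map, ← map_smul]
  rw [hn₁'_eq, hn₂_eq]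
  exact not_linearIndependent_reflection_bisector finrank_euclideanSpace_fin
    (norm_smul_inv_norm (sub_ne_zero.mpr hPF)) (norm_smul_inv_norm (sub_ne_zero.mpr hPF'))
    (norm_smul_inv_norm (sub_ne_zero.mpr hFi.symm)) huv

/-- **The foci circle of the Kepler billiard.** Let `P` lie on the boundary ellipse `B` with
foci `F ≠ F'` and semi-major axis `A_K` (so `P ≠ F`, `P ≠ F'`), let `t` be the tangent line
of `B` at `P` (through `P`, perpendicular to `N`), let `F_i ≠ P` and let `F_next` be the
reflection of `F_i` across the line through `P` and `F'`.  Then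
(i) `dist F' F_next = dist F' F_i`, (ii) `dist P F_next = dist P F_i`, and
(iii) the reflection across `t` carries the tangent direction at `P` of the flight ellipse
with foci `F, F_i` to that of the flight ellipse with foci `F, F_next` (the reflected
normal `n₁'` is linearly dependent with `n₂`).  Hence reflecting the second focus across
the line `P F'` implements elastic reflection at `B`, and all consecutive second foci lie
on the circle centered at `F'` of radius `dist F' F_i`. -/
theorem kepler_foci_circle
    (F F' : EuclideanSpace ℝ (Fin 2)) (hFF' : F ≠ F') (A_K : ℝ)
    (hA : 2 * A_K > dist F F')
    (P : EuclideanSpace ℝ (Fin 2)) (hP : dist P F + dist P F' = 2 * A_K)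
    (N : EuclideanSpace ℝ (Fin 2))
    (hN : N = ‖P - F‖⁻¹ • (P - F) + ‖P - F'‖⁻¹ • (P - F'))
    (F_i : EuclideanSpace ℝ (Fin 2)) (hFi : F_i ≠ P)
    (F_next : EuclideanSpace ℝ (Fin 2))
    (hFnext : F_next = EuclideanGeometry.reflection
      (affineSpan ℝ ({P, F'} : Set (EuclideanSpace ℝ (Fin 2)))) F_i)
    (n₁ n₂ n₁' : EuclideanSpace ℝ (Fin 2))
    (hn₁ : n₁ = ‖P - F‖⁻¹ • (P - F) + ‖P - F_i‖⁻¹ • (P - F_i))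
    (hn₂ : n₂ = ‖P - F‖⁻¹ • (P - F) + ‖P - F_next‖⁻¹ • (P - F_next))
    (hn₁' : n₁' = EuclideanGeometry.reflection (perpLineAt P N) (P + n₁) - P) :
    P ≠ F ∧ P ≠ F' ∧
    dist F' F_next = dist F' F_i ∧
    dist P F_next = dist P F_i ∧
    ¬ LinearIndependent ℝ ![n₁', n₂] :=
  kepler_foci_circle_general F F' A_K hA P hP N hN F_i hFi F_next hFnext n₁ n₂ n₁' hn₁ hn₂ hn₁'
end

section
/- Let m, E, α, c, A₁, A₂, L, D be real numbers with m ≠ 0, E ≠ 0, satisfying the Laplace–Runge–Lenz relation A₁² + A₂² = m²α² + 2mEL² and D = L² − 2cA₁. Then (A₁/(mE) − 2c)² + (A₂/(mE))² = 4c² + α²/E² + 2D/(mE). (Since (A₁/(mE), A₂/(mE)) is the second focus of the Kepler flight ellipse, this shows that conservation of the Gallavotti–Jauslin integral D = L² − 2cA₁ and the energy E forces the second foci of consecutive flight ellipses to lie on the circle centered at (2c, 0) — the second focus of the boundary conic — with radius R = √(4c² + α²/E² + 2D/(mE)).) -/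
/-- **The Gallavotti–Jauslin integral forces the second foci onto a circle.**
If `A₁² + A₂² = m²α² + 2mEL²` (the Laplace–Runge–Lenz relation) and `D = L² − 2cA₁`,
with `m ≠ 0`, `E ≠ 0`, then
`(A₁/(mE) − 2c)² + (A₂/(mE))² = 4c² + α²/E² + 2D/(mE)`;
i.e. the second focus `(A₁/(mE), A₂/(mE))` of the Kepler flight ellipse lies on the
circle centered at `(2c, 0)` of radius `√(4c² + α²/E² + 2D/(mE))`. -/
theorem kepler_foci_circle_from_integrals
    (m E α c A₁ A₂ L D : ℝ) (hm : m ≠ 0) (hE : E ≠ 0)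
    (hLRL : A₁ ^ 2 + A₂ ^ 2 = m ^ 2 * α ^ 2 + 2 * m * E * L ^ 2)
    (hD : D = L ^ 2 - 2 * c * A₁) :
    (A₁ / (m * E) - 2 * c) ^ 2 + (A₂ / (m * E)) ^ 2
      = 4 * c ^ 2 + α ^ 2 / E ^ 2 + 2 * D / (m * E) := by
  calc (A₁ / (m * E) - 2 * c) ^ 2 + (A₂ / (m * E)) ^ 2
      = (A₁ ^ 2 + A₂ ^ 2) / (m * E) ^ 2 - 4 * c * A₁ / (m * E) + 4 * c ^ 2 := by ring
    _ = 4 * c ^ 2 + α ^ 2 / E ^ 2 + 2 * D / (m * E) := by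
      rw [hLRL, hD]
      field_simp
      ring
end

section
/- Let F₁, F₂ ∈ ℝ² and a₁, a₂ ∈ ℝ with 2a₁ > ‖F₁‖, 2a₂ > ‖F₂‖, and (F₁, a₁) ≠ (F₂, a₂). Then the set {z ∈ ℝ² : ‖z‖ + ‖z − F₁‖ = 2a₁ and ‖z‖ + ‖z − F₂‖ = 2a₂} has at most two elements. (Two distinct ellipses sharing the focus at the origin intersect in at most two points; in particular any Kepler flight ellipse intersects the focused conic boundary in at most two points.) -/
/-!
Squaring `‖z - F‖ = 2a - ‖z‖` shows that the ellipse with foci `0`, `F` lies on the focal conic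
`‖z‖ = ⟪z, u⟫ + c` with eccentricity vector `u = F / (2a)`, `‖u‖ < 1`, and `c = a (1 - ‖u‖²)`;
the pair `(u, c)` determines `(F, a)`. Subtracting the focal equations of two distinct such conics
confines their common points to the line `⟪z, u₁ - u₂⟫ = c₂ - c₁` (if `u₁ = u₂` they have none).
Along a line `z + t v` the focal equation squares to a quadratic in `t` with leading coefficient
`‖v‖² - ⟪v, u⟫² > 0`, so the line meets the conic at most twice.
-/

open Module Set
open scoped RealInnerProductSpace

theorem Set.encard_le_two_of_forall_eq_or_eq {α : Type*} {s : Set α}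
    (h : ∀ x ∈ s, ∀ y ∈ s, x ≠ y → ∀ z ∈ s, z = x ∨ z = y) : s.encard ≤ 2 := by
  rcases s.subsingleton_or_nontrivial with hs | ⟨x, hx, y, hy, hxy⟩
  · exact (encard_le_one_iff_subsingleton.mpr hs).trans one_le_two
  · calc s.encard ≤ ({x, y} : Set α).encard := encard_le_encard fun z hz => h x hx y hy hxy z hz
      _ = 2 := encard_pair hxy

section FocalConic

variable {E : Type*} [NormedAddCommGroup E] [InnerProductSpace ℝ E]

def focalConic (p : E × ℝ) : Set E := {z | ‖z‖ = ⟪z, p.1⟫ + p.2}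

noncomputable def ellipseFocalParams (F : E) (a : ℝ) : E × ℝ :=
  ((2 * a)⁻¹ • F, a - ‖F‖ ^ 2 / (4 * a))

theorem mem_focalConic_ellipseFocalParams {F z : E} {a : ℝ} (ha : a ≠ 0)
    (hz : ‖z‖ + ‖z - F‖ = 2 * a) : z ∈ focalConic (ellipseFocalParams F a) := by
  have hsq : ‖z - F‖ ^ 2 = (2 * a - ‖z‖) ^ 2 := by rw [← hz]; ring
  rw [norm_sub_sq_real] at hsq
  simp only [focalConic, ellipseFocalParams, mem_ofPred_eq, inner_smul_right]
  field_simp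
  linear_combination 2 * hsq

theorem norm_ellipseFocalParams_fst_lt_one {F : E} {a : ℝ} (h : ‖F‖ < 2 * a) :
    ‖(ellipseFocalParams F a).1‖ < 1 := by
  have ha : 0 < 2 * a := (norm_nonneg F).trans_lt h
  rw [ellipseFocalParams, norm_smul, Real.norm_of_nonneg (inv_nonneg.mpr ha.le),
    inv_mul_lt_one₀ ha]
  exact h

theorem ellipseFocalParams_injOn :
    InjOn (Function.uncurry (ellipseFocalParams (E := E))) {p | ‖p.1‖ < 2 * p.2} := by
  rintro ⟨F₁, a₁⟩ h₁ ⟨F₂, a₂⟩ h₂ h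
  have hu₁ : ‖(2 * a₁)⁻¹ • F₁‖ < 1 := norm_ellipseFocalParams_fst_lt_one h₁
  simp only [mem_ofPred_eq] at h₁ h₂
  obtain ⟨hu, hc⟩ := Prod.ext_iff.mp h
  dsimp only [Function.uncurry, ellipseFocalParams] at hu hc hu₁
  set u := (2 * a₁)⁻¹ • F₁
  have ha₁ : 0 < a₁ := by linarith [norm_nonneg F₁]
  have ha₂ : 0 < a₂ := by linarith [norm_nonneg F₂]
  have hF₁ : F₁ = (2 * a₁) • u := (smul_inv_smul₀ (by positivity) F₁).symm
  have hF₂ : F₂ = (2 * a₂) • u := by rw [hu, smul_inv_smul₀ (by positivity)]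
  have hc' : a₁ * (1 - ‖u‖ ^ 2) = a₂ * (1 - ‖u‖ ^ 2) := by
    have hn₁ : ‖F₁‖ = 2 * a₁ * ‖u‖ := by
      rw [hF₁, norm_smul, Real.norm_of_nonneg (by positivity)]
    have hn₂ : ‖F₂‖ = 2 * a₂ * ‖u‖ := by
      rw [hF₂, norm_smul, Real.norm_of_nonneg (by positivity)]
    rw [hn₁, hn₂] at hc
    field_simp at hc
    linear_combination hc / 4
  have ha : a₁ = a₂ := mul_right_cancel₀ (by nlinarith [norm_nonneg u]) hc'
  rw [hF₁, hF₂, ha]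

theorem eq_zero_or_eq_one_of_add_smul_mem_focalConic {p : E × ℝ} {z v : E} {s : ℝ}
    (hp : ‖p.1‖ < 1) (hv : v ≠ 0) (h₀ : z ∈ focalConic p) (h₁ : z + v ∈ focalConic p)
    (hs : z + s • v ∈ focalConic p) : s = 0 ∨ s = 1 := by
  obtain ⟨u, c⟩ := p
  have quad : ∀ t : ℝ, z + t • v ∈ focalConic (u, c) →
      t * ((‖v‖ ^ 2 - ⟪v, u⟫ ^ 2) * t + 2 * (⟪z, v⟫ - (⟪z, u⟫ + c) * ⟪v, u⟫)) = 0 := by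
    intro t ht
    simp only [focalConic, mem_ofPred_eq] at h₀ ht
    have := congrArg (· ^ 2) ht
    simp only [norm_add_sq_real, norm_smul, inner_add_left, inner_smul_right,
      real_inner_smul_left, mul_pow, Real.norm_eq_abs, sq_abs] at this
    linear_combination this - (‖z‖ + ⟪z, u⟫ + c) * h₀
  have hA : 0 < ‖v‖ ^ 2 - ⟪v, u⟫ ^ 2 := by
    have hv' : 0 < ‖v‖ := norm_pos_iff.mpr hv
    have hlt : |⟪v, u⟫| < ‖v‖ :=
      (abs_real_inner_le_norm v u).trans_lt (mul_lt_of_lt_one_right hv' hp)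
    exact sub_pos.mpr (sq_lt_sq.mpr (by rwa [abs_norm]))
  have q₁ := quad 1 (by rwa [one_smul])
  have qs := quad s hs
  have : s * (s - 1) * (‖v‖ ^ 2 - ⟪v, u⟫ ^ 2) = 0 := by linear_combination qs - s * q₁
  simpa [hA.ne', sub_eq_zero] using this

theorem encard_focalConic_inter_le_two [Fact (finrank ℝ E = 2)] {p q : E × ℝ} (hp : ‖p.1‖ < 1)
    (hpq : p ≠ q) : (focalConic p ∩ focalConic q).encard ≤ 2 := by
  have radical : ∀ w ∈ focalConic p ∩ focalConic q, ⟪w, p.1 - q.1⟫ = q.2 - p.2 := by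
    rintro w ⟨hwp, hwq⟩
    rw [inner_sub_right]
    linarith [hwp.symm.trans hwq]
  apply Set.encard_le_two_of_forall_eq_or_eq
  intro x hx y hy hxy z hz
  have hpq₁ : p.1 - q.1 ≠ 0 := by
    intro h
    have hx' := radical x hx
    rw [h, inner_zero_right] at hx'
    exact hpq (Prod.ext (sub_eq_zero.mp h) (by linarith))
  have orth : ∀ w ∈ focalConic p ∩ focalConic q, ⟪p.1 - q.1, w - x⟫ = 0 := fun w hw => by
    rw [real_inner_comm, inner_sub_left, radical w hw, radical x hx, sub_self]
  have hyx : y - x ≠ 0 := sub_ne_zero.mpr hxy.symm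
  obtain ⟨s, hs⟩ := Submodule.mem_span_singleton.mp <|
    Submodule.mem_span_singleton_of_inner_eq_zero_of_inner_eq_zero hpq₁ hyx (orth z hz)
      (orth y hy)
  have hz' : z = x + s • (y - x) := by rw [hs, add_sub_cancel]
  rcases eq_zero_or_eq_one_of_add_smul_mem_focalConic hp hyx hx.1
    (by rw [add_sub_cancel]; exact hy.1) (hz' ▸ hz.1) with rfl | rfl
  · left
    simpa using hz'
  · right
    simpa using hz'

end FocalConic

/-- **Two distinct ellipses with a common focus at the origin meet in at most two points.**
If `2a₁ > ‖F₁‖`, `2a₂ > ‖F₂‖` and `(F₁, a₁) ≠ (F₂, a₂)`, then the set of points `z` with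
`‖z‖ + ‖z − F₁‖ = 2a₁` and `‖z‖ + ‖z − F₂‖ = 2a₂` has at most two elements.  In particular
any Kepler flight ellipse intersects the focused conic boundary in at most two points. -/
theorem ellipses_common_focus_intersect_at_most_two
    (F₁ F₂ : EuclideanSpace ℝ (Fin 2)) (a₁ a₂ : ℝ)
    (h₁ : 2 * a₁ > ‖F₁‖) (h₂ : 2 * a₂ > ‖F₂‖)
    (hne : (F₁, a₁) ≠ (F₂, a₂)) :
    ({z : EuclideanSpace ℝ (Fin 2) |
        ‖z‖ + ‖z - F₁‖ = 2 * a₁ ∧ ‖z‖ + ‖z - F₂‖ = 2 * a₂}).encard ≤ 2 := by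
  have : Fact (finrank ℝ (EuclideanSpace ℝ (Fin 2)) = 2) := ⟨finrank_euclideanSpace_fin⟩
  have ha₁ : a₁ ≠ 0 := by linarith [norm_nonneg F₁]
  have ha₂ : a₂ ≠ 0 := by linarith [norm_nonneg F₂]
  refine (encard_le_encard fun z hz => ?_).trans <|
    encard_focalConic_inter_le_two (norm_ellipseFocalParams_fst_lt_one h₁)
      fun h => hne (ellipseFocalParams_injOn h₁ h₂ h)
  exact ⟨mem_focalConic_ellipseFocalParams ha₁ hz.1, mem_focalConic_ellipseFocalParams ha₂ hz.2⟩
end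

section
/- Let a > 0, c ≥ 0, R ∈ ℝ, and for α ∈ ℝ set F_x(α) = 2c + R·cos α, F_y(α) = R·sin α and K(x,y,α) = 16a²(x²+y²) − (F_x(α)² + F_y(α)² − 4a² − 2x·F_x(α) − 2y·F_y(α))². Suppose (x,y) ≠ (0,0), K(x,y,α) = 0, and the derivative of the function α ↦ K(x,y,α) vanishes at α. Then P₊(x,y)·P₋(x,y) = 0, where P_±(x,y) = ((a ± R/2)² − c²)·(x−c)² + (a ± R/2)²·y² − (a ± R/2)²·((a ± R/2)² − c²). (The envelope of the family of Kepler flight conics with foci at the origin and on the foci circle of radius R around (2c,0) is contained in the union of the two confocal conics E_± with foci (0,0) and (2c,0) and parameters a ± R/2.) -/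
/-- **Envelope of the Kepler flight conics.**
For the family `K(x,y,α) = 16a²(x²+y²) − (F_x(α)² + F_y(α)² − 4a² − 2xF_x(α) − 2yF_y(α))²`
with second foci `F(α) = (2c + R cos α, R sin α)`, if `(x,y) ≠ (0,0)`, `K(x,y,α) = 0` and
`∂K/∂α (x,y,α) = 0`, then `P₊(x,y) · P₋(x,y) = 0` where
`P_±(x,y) = ((a ± R/2)² − c²)(x−c)² + (a ± R/2)² y² − (a ± R/2)²((a ± R/2)² − c²)`:
the envelope is contained in the union of the two confocal conics `E_±` with foci
`(0,0)`, `(2c,0)` and parameters `a ± R/2`. -/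
theorem kepler_envelope_confocal_conics
    (a c R : ℝ) (ha : 0 < a) (hc : 0 ≤ c)
    (Fx Fy : ℝ → ℝ)
    (hFx : ∀ α, Fx α = 2 * c + R * Real.cos α)
    (hFy : ∀ α, Fy α = R * Real.sin α)
    (K : ℝ → ℝ → ℝ → ℝ)
    (hK : ∀ x y α, K x y α = 16 * a ^ 2 * (x ^ 2 + y ^ 2)
      - (Fx α ^ 2 + Fy α ^ 2 - 4 * a ^ 2 - 2 * x * Fx α - 2 * y * Fy α) ^ 2)
    (x y α : ℝ) (hxy : (x, y) ≠ ((0 : ℝ), (0 : ℝ)))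
    (h0 : K x y α = 0)
    (hd : deriv (fun β => K x y β) α = 0) :
    (((a + R / 2) ^ 2 - c ^ 2) * (x - c) ^ 2 + (a + R / 2) ^ 2 * y ^ 2
        - (a + R / 2) ^ 2 * ((a + R / 2) ^ 2 - c ^ 2))
      * (((a - R / 2) ^ 2 - c ^ 2) * (x - c) ^ 2 + (a - R / 2) ^ 2 * y ^ 2
        - (a - R / 2) ^ 2 * ((a - R / 2) ^ 2 - c ^ 2)) = 0 := by
  -- the inner function g
  set g : ℝ → ℝ := fun β =>
    (2 * c + R * Real.cos β) ^ 2 + (R * Real.sin β) ^ 2 - 4 * a ^ 2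
      - 2 * x * (2 * c + R * Real.cos β) - 2 * y * (R * Real.sin β) with hg
  have hfun : (fun β => K x y β) = fun β => 16 * a ^ 2 * (x ^ 2 + y ^ 2) - (g β) ^ 2 := by
    funext β
    rw [hK, hFx, hFy, hg]
  -- derivative of g
  have hA : HasDerivAt (fun β => 2 * c + R * Real.cos β) (R * (-Real.sin α)) α :=
    ((Real.hasDerivAt_cos α).const_mul R).const_add (2 * c)
  have hB : HasDerivAt (fun β => R * Real.sin β) (R * Real.cos α) α :=
    (Real.hasDerivAt_sin α).const_mul R
  have hgd : HasDerivAt g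
      (2 * (2 * c + R * Real.cos α) ^ 1 * (R * (-Real.sin α))
        + 2 * (R * Real.sin α) ^ 1 * (R * Real.cos α)
        - 2 * x * (R * (-Real.sin α)) - 2 * y * (R * Real.cos α)) α := by
    exact (((hA.pow 2).add (hB.pow 2)).sub_const (4 * a ^ 2)).sub
      (hA.const_mul (2 * x)) |>.sub (hB.const_mul (2 * y))
  set gd : ℝ := 2 * (2 * c + R * Real.cos α) ^ 1 * (R * (-Real.sin α))
        + 2 * (R * Real.sin α) ^ 1 * (R * Real.cos α)
        - 2 * x * (R * (-Real.sin α)) - 2 * y * (R * Real.cos α) with hgddef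
  have hf : HasDerivAt (fun β => 16 * a ^ 2 * (x ^ 2 + y ^ 2) - (g β) ^ 2)
      (-(2 * g α ^ 1 * gd)) α := by
    simpa using (hgd.pow 2).const_sub (16 * a ^ 2 * (x ^ 2 + y ^ 2))
  rw [hfun] at hd
  rw [hf.deriv] at hd
  -- K = 0 in explicit form
  have h0' : (g α) ^ 2 = 16 * a ^ 2 * (x ^ 2 + y ^ 2) := by
    have := h0
    rw [hK, hFx, hFy] at this
    rw [hg]
    linear_combination -this
  -- g α ≠ 0
  have hr : 0 < x ^ 2 + y ^ 2 := by
    have hxy' : ¬(x = 0 ∧ y = 0) := by simpa [Prod.ext_iff] using hxy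
    rcases not_and_or.mp hxy' with h | h
    · have h2 : 0 < x ^ 2 := (sq_nonneg x).lt_of_ne (Ne.symm (pow_ne_zero 2 h))
      nlinarith [sq_nonneg y]
    · have h2 : 0 < y ^ 2 := (sq_nonneg y).lt_of_ne (Ne.symm (pow_ne_zero 2 h))
      nlinarith [sq_nonneg x]
  have hgne : g α ≠ 0 := by
    intro h
    rw [h] at h0'
    nlinarith [mul_pos (mul_pos ha ha) hr]
  -- derivative condition gives gd = 0
  have hq : gd = 0 := by
    have h2 : 2 * g α ^ 1 * gd = 0 := by linarith [hd]
    have := mul_eq_zero.mp h2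
    rcases this with h | h
    · exfalso
      rcases mul_eq_zero.mp h with h' | h'
      · norm_num at h'
      · exact hgne (by simpa using h')
    · exact h
  -- now pure algebra
  have h3 : Real.sin α ^ 2 + Real.cos α ^ 2 = 1 := Real.sin_sq_add_cos_sq α
  set s := Real.sin α
  set co := Real.cos α
  set V : ℝ := R * ((2 * x - 4 * c) * co + 2 * y * s) with hV0
  set M : ℝ := 4 * c ^ 2 - 4 * c * x + R ^ 2 - 4 * a ^ 2 with hM0
  set d2 : ℝ := (x - 2 * c) ^ 2 + y ^ 2 with hd20
  set r2 : ℝ := x ^ 2 + y ^ 2 with hr20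
  have hV : V ^ 2 = 4 * R ^ 2 * d2 := by
    rw [hV0, hd20]
    linear_combination (4 * R ^ 2 * ((x - 2 * c) ^ 2 + y ^ 2)) * h3
      - (R * ((2 * x - 4 * c) * s - 2 * y * co)) * hq
  have hDe : g α = M - V := by
    rw [hg, hM0, hV0]
    simp only []
    linear_combination R ^ 2 * h3
  have hD : (M - V) ^ 2 = 16 * a ^ 2 * r2 := by
    rw [← hDe, hr20]; exact h0'
  have hMV : 2 * M * V = M ^ 2 + 4 * R ^ 2 * d2 - 16 * a ^ 2 * r2 := by
    linear_combination hV - hD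
  have hS : (M ^ 2 + 4 * R ^ 2 * d2 - 16 * a ^ 2 * r2) ^ 2 = 16 * M ^ 2 * R ^ 2 * d2 := by
    linear_combination 4 * M ^ 2 * hV
      - (2 * M * V + (M ^ 2 + 4 * R ^ 2 * d2 - 16 * a ^ 2 * r2)) * hMV
  rw [hM0, hd20, hr20] at hS
  linear_combination hS / 256
end

section
/- Let a, c, R, x, y ∈ ℝ and for α ∈ ℝ set d_K(x,y,α) = x·(2c + R cos α) + y·R sin α + 2a² − 2c² − R²/2 − 2cR cos α. Suppose d_K(x,y,α) = 0 and the derivative of the function α ↦ d_K(x,y,α) vanishes at α (i.e. −xR sin α + yR cos α + 2cR sin α = 0). Then x²(R² − 4c²) − 2cx(4a² − 4c² + R²) + 4c²R² − ¼(4a² − 4c² − R²)² + R²y² = 0. (Hence the envelope of the family of directrices of the Kepler flight ellipses is contained in a conic with one focus at F' = (2c,0): an ellipse or hyperbola when 2c ≠ R, and a parabola when 2c = R.) -/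
/-!
Each directrix has the form `A cos α + B sin α + C = 0` with `A = (x - 2c)R`, `B = yR`.
Together with its `α`-derivative `B cos α - A sin α = 0` this is a rotation of the vector
`(A, B)` onto `(-C, 0)`, so the envelope condition is `A² + B² = C²`.
-/

open Real

lemma sq_add_sq_cos_sin_rotation (A B t : ℝ) :
    (A * cos t + B * sin t) ^ 2 + (B * cos t - A * sin t) ^ 2 = A ^ 2 + B ^ 2 := by
  linear_combination (A ^ 2 + B ^ 2) * sin_sq_add_cos_sq t

lemma hasDerivAt_cos_sin_add_const (A B C t : ℝ) :
    HasDerivAt (fun s => A * cos s + B * sin s + C) (B * cos t - A * sin t) t := by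
  have h := (((hasDerivAt_cos t).const_mul A).add ((hasDerivAt_sin t).const_mul B)).add_const C
  exact h.congr_deriv (by ring)

lemma sq_add_sq_eq_sq_of_envelope {A B C t : ℝ}
    (h0 : A * cos t + B * sin t + C = 0)
    (hd : deriv (fun s => A * cos s + B * sin s + C) t = 0) :
    A ^ 2 + B ^ 2 = C ^ 2 := by
  rw [(hasDerivAt_cos_sin_add_const A B C t).deriv] at hd
  rw [← sq_add_sq_cos_sin_rotation A B t, hd, eq_neg_of_add_eq_zero_left h0]
  ring

/-- **Envelope of the family of directrices of the Kepler flight ellipses.**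
For the family `d_K(x,y,α) = x(2c + R cos α) + yR sin α + 2a² − 2c² − R²/2 − 2cR cos α`,
if `d_K(x,y,α) = 0` and `∂d_K/∂α (x,y,α) = 0`, then
`x²(R² − 4c²) − 2cx(4a² − 4c² + R²) + 4c²R² − ¼(4a² − 4c² − R²)² + R²y² = 0`:
the envelope of the directrices is contained in a conic with one focus at `(2c, 0)`. -/
theorem kepler_directrix_envelope
    (a c R x y α : ℝ)
    (dK : ℝ → ℝ)
    (hdK : ∀ β, dK β = x * (2 * c + R * Real.cos β) + y * (R * Real.sin β)
      + 2 * a ^ 2 - 2 * c ^ 2 - R ^ 2 / 2 - 2 * c * R * Real.cos β)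
    (h0 : dK α = 0)
    (hd : deriv dK α = 0) :
    x ^ 2 * (R ^ 2 - 4 * c ^ 2) - 2 * c * x * (4 * a ^ 2 - 4 * c ^ 2 + R ^ 2)
      + 4 * c ^ 2 * R ^ 2 - (1 / 4) * (4 * a ^ 2 - 4 * c ^ 2 - R ^ 2) ^ 2
      + R ^ 2 * y ^ 2 = 0 := by
  have hform : dK = fun β => (x - 2 * c) * R * cos β + y * R * sin β
      + (2 * c * x + 2 * a ^ 2 - 2 * c ^ 2 - R ^ 2 / 2) := by
    funext β
    rw [hdK]
    ring
  subst hform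
  have henv := sq_add_sq_eq_sq_of_envelope h0 hd
  linear_combination henv
end

section
/- Let a > 0, c > 0 with R = 2c, and let x, y, α ∈ ℝ. Set d_K(x,y,α) = x·(2c + 2c·cos α) + y·2c·sin α + 2a² − 2c² − 2c² − 4c²cos α. If d_K(x,y,α) = 0 and the derivative of α ↦ d_K(x,y,α) vanishes at α, then x = (c/(2a²))·y² − a²/(2c) + 2c. (When the foci circle passes through the Kepler center, i.e. R = 2c, the envelope of the family of directrices of the Kepler flight ellipses is a parabolic arc with focus at F' = (2c,0).) -/
/-!
Writing `u = x - 2c`, the family is `d_K(β) = r + p cos β + q sin β` with `p = 2cu`, `q = 2cy`,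
`r = 2a² + 2cu`. A double zero of such a harmonic function forces `p² + q² = r²`, since
`(p cos α + q sin α)² + (-p sin α + q cos α)² = p² + q²`. Here this reads
`c²(u² + y²) = (a² + cu)²`: the point is as far from the focus `(2c, 0)` as from the line
`u = -a²/c`, and solving for `u` gives the parabola.
-/

open Real

theorem hasDerivAt_const_add_mul_cos_add_mul_sin (r p q α : ℝ) :
    HasDerivAt (fun β => r + p * cos β + q * sin β) (-p * sin α + q * cos α) α := by
  have h := (((hasDerivAt_cos α).const_mul p).const_add r).add ((hasDerivAt_sin α).const_mul q)
  exact h.congr_deriv (by ring)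

theorem sq_add_sq_eq_sq_of_cos_sin {r p q α : ℝ} (h0 : r + p * cos α + q * sin α = 0)
    (h1 : -p * sin α + q * cos α = 0) : p ^ 2 + q ^ 2 = r ^ 2 := by
  linear_combination (-(p ^ 2 + q ^ 2)) * sin_sq_add_cos_sq α
    + (-p * sin α + q * cos α) * h1 - (r - p * cos α - q * sin α) * h0

theorem sq_add_sq_eq_sq_of_deriv_eq_zero {f : ℝ → ℝ} {r p q α : ℝ}
    (hf : ∀ β, f β = r + p * cos β + q * sin β) (h0 : f α = 0) (hd : deriv f α = 0) :
    p ^ 2 + q ^ 2 = r ^ 2 := by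
  obtain rfl : f = fun β => r + p * cos β + q * sin β := funext hf
  rw [(hasDerivAt_const_add_mul_cos_add_mul_sin r p q α).deriv] at hd
  exact sq_add_sq_eq_sq_of_cos_sin h0 hd

/-- **Parabolic envelope of the directrices when the foci circle passes through the
Kepler center (`R = 2c`).**  For the family
`d_K(x,y,α) = x(2c + 2c cos α) + y·2c sin α + 2a² − 2c² − 2c² − 4c² cos α`,
if `d_K(x,y,α) = 0` and `∂d_K/∂α (x,y,α) = 0`, then
`x = (c/(2a²))y² − a²/(2c) + 2c`: the envelope of the directrices is a parabolic arc
with focus at `F' = (2c, 0)`. -/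
theorem kepler_directrix_envelope_parabolic
    (a c : ℝ) (ha : 0 < a) (hc : 0 < c) (x y α : ℝ)
    (dK : ℝ → ℝ)
    (hdK : ∀ β, dK β = x * (2 * c + 2 * c * Real.cos β) + y * (2 * c * Real.sin β)
      + 2 * a ^ 2 - 2 * c ^ 2 - 2 * c ^ 2 - 4 * c ^ 2 * Real.cos β)
    (h0 : dK α = 0)
    (hd : deriv dK α = 0) :
    x = (c / (2 * a ^ 2)) * y ^ 2 - a ^ 2 / (2 * c) + 2 * c := by
  have hharmonic : ∀ β, dK β = (2 * a ^ 2 + 2 * c * (x - 2 * c)) + 2 * c * (x - 2 * c) * cos β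
      + 2 * c * y * sin β := fun β => by rw [hdK]; ring
  have hfocus := sq_add_sq_eq_sq_of_deriv_eq_zero hharmonic h0 hd
  field_simp
  linear_combination (-1 / 4 : ℝ) * hfocus
end

section
/- Let p > q > 0. Then the image of the centered ellipse {z ∈ ℂ : (Re z)²/p + (Im z)²/q = 1} under the complex square map z ↦ z² equals the focused conic {w ∈ ℂ : |w| + |w − (p − q)| = p + q}, an ellipse with one focus at the origin and second focus at the real point p − q. (The complex square map sends the centered Hooke ellipse with semi-axes √p, √q onto the Kepler ellipse with a focus at the Hooke/Kepler center; in particular the centered Hooke boundary B_H corresponds to the focused Kepler boundary B_K.) -/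
/-!
For `z = x + iy` one has the identity
`‖z² − (p − q)‖² = (p + q − ‖z‖²)² + 4 (q x² + p y² − p q)`,
so `z` lies on the Hooke ellipse `q x² + p y² = p q` exactly when
`‖z²‖ + ‖z² − (p − q)‖ = p + q` (on the ellipse `‖z‖² ≤ p`, which fixes the sign of the
square root). The Hooke ellipse is thus the full preimage of the Kepler ellipse under
`z ↦ z²`, and since squaring is onto `ℂ` its image is the whole Kepler ellipse.
-/

namespace Complex

theorem norm_sq_sq_sub_eq (p q : ℝ) (z : ℂ) :
    ‖z ^ 2 - ((p : ℂ) - q)‖ ^ 2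
      = (p + q - ‖z‖ ^ 2) ^ 2 + 4 * (q * z.re ^ 2 + p * z.im ^ 2 - p * q) := by
  simp only [Complex.sq_norm, normSq_apply, sub_re, sub_im, ofReal_re, ofReal_im, sq z, mul_re,
    mul_im]
  ring

theorem norm_sq_le_of_mul_re_sq_add_mul_im_sq_eq {p q : ℝ} {z : ℂ} (hq : 0 < q) (hpq : q ≤ p)
    (hz : q * z.re ^ 2 + p * z.im ^ 2 = p * q) : ‖z‖ ^ 2 ≤ p := by
  rw [Complex.sq_norm, normSq_apply]
  nlinarith [sq_nonneg z.im]

theorem mul_re_sq_add_mul_im_sq_eq_iff {p q : ℝ} {z : ℂ} (hq : 0 < q) (hpq : q ≤ p) :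
    q * z.re ^ 2 + p * z.im ^ 2 = p * q ↔ ‖z ^ 2‖ + ‖z ^ 2 - ((p : ℂ) - q)‖ = p + q := by
  have key := norm_sq_sq_sub_eq p q z
  rw [norm_pow]
  constructor
  · intro hz
    have hle := norm_sq_le_of_mul_re_sq_add_mul_im_sq_eq hq hpq hz
    rw [hz, sub_self, mul_zero, add_zero] at key
    rw [(pow_left_inj₀ (norm_nonneg _) (by linarith) two_ne_zero).mp key]
    ring
  · intro hw
    rw [show ‖z ^ 2 - ((p : ℂ) - q)‖ = p + q - ‖z‖ ^ 2 by linarith] at key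
    linarith

end Complex

theorem div_add_div_eq_one_iff {K : Type*} [Field K] {a b p q : K} (hp : p ≠ 0) (hq : q ≠ 0) :
    a / p + b / q = 1 ↔ q * a + p * b = p * q := by
  rw [div_add_div _ _ hp hq, div_eq_one_iff_eq (mul_ne_zero hp hq)]
  ring_nf

/-- **The complex square map sends centered Hooke ellipses to focused Kepler ellipses.**
For `p > q > 0`, the image of the centered ellipse `(Re z)²/p + (Im z)²/q = 1` under
`z ↦ z²` equals the focused conic `{w : |w| + |w − (p−q)| = p + q}`, an ellipse with one
focus at the origin and second focus at the real point `p − q`. -/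
theorem hooke_boundary_to_kepler_boundary
    (p q : ℝ) (hq : 0 < q) (hpq : q < p) :
    (fun z : ℂ => z ^ 2) '' {z : ℂ | z.re ^ 2 / p + z.im ^ 2 / q = 1}
      = {w : ℂ | ‖w‖ + ‖w - ((p : ℂ) - (q : ℂ))‖ = p + q} := by
  have hooke_eq_preimage : {z : ℂ | z.re ^ 2 / p + z.im ^ 2 / q = 1}
      = (fun z : ℂ => z ^ 2) ⁻¹' {w : ℂ | ‖w‖ + ‖w - ((p : ℂ) - (q : ℂ))‖ = p + q} := by
    ext z
    exact (div_add_div_eq_one_iff (hq.trans hpq).ne' hq.ne').trans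
      (Complex.mul_re_sq_add_mul_im_sq_eq_iff hq hpq.le)
  rw [hooke_eq_preimage, Set.image_preimage_eq _ fun w => IsAlgClosed.exists_pow_nat_eq w two_pos]
end

section
/- Let c_H > 0, R_H > 0, β > 0 and ε ∈ {1, −1}; set p = β + (c_H² + ε·R_H²)/2 and q = β + (−c_H² + ε·R_H²)/2, and assume q > 0. Then the image under the complex square map z ↦ z² of the Hooke envelope conic E_{Hε} = {z ∈ ℂ : (Re z)²/p + (Im z)²/q = 1} equals the Kepler envelope conic {w ∈ ℂ : |w| + |w − c_H²| = 2β + ε·R_H²}, which is confocal with the Kepler boundary (foci 0 and (c_H², 0)) and has semi-major axis β + ε·R_H²/2. (With β = E/k, this identifies the envelope curves E_{H±} of the Hooke billiard flight ellipses, x²/(½(c_H² ± R_H²) + E/k) + y²/(½(−c_H² ± R_H²) + E/k) = 1, as the duals of the Kepler envelopes E_±.) -/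
/-!
Write `z = x + iy` and `c = p - q`. Expanding `|z² - c|² = (x² - y² - c)² + 4x²y²` gives
`|z² - c|² = (p + q - |z|²)² + 4 (q x² + p y² - p q)`, so on the ellipse `q x² + p y² = p q`
the distance from `z²` to the focus `c` is `p + q - |z|²` while the distance to the focus `0`
is `|z|²`; conversely this identity forces every square root of a point of the Kepler conic
onto the ellipse.
-/

namespace Complex

lemma norm_sq_sub_ofReal_sq (z : ℂ) (p q : ℝ) :
    ‖z ^ 2 - ((p - q : ℝ) : ℂ)‖ ^ 2
      = (p + q - ‖z‖ ^ 2) ^ 2 + 4 * (q * z.re ^ 2 + p * z.im ^ 2 - p * q) := by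
  rw [Complex.sq_norm, Complex.sq_norm, normSq_apply, normSq_apply]
  simp only [sq, sub_re, sub_im, mul_re, mul_im, ofReal_re, ofReal_im]
  ring

lemma re_sq_div_add_im_sq_div_eq_one_iff {p q : ℝ} (hp : p ≠ 0) (hq : q ≠ 0) (z : ℂ) :
    z.re ^ 2 / p + z.im ^ 2 / q = 1 ↔ q * z.re ^ 2 + p * z.im ^ 2 - p * q = 0 := by
  rw [div_add_div _ _ hp hq, div_eq_one_iff_eq (mul_ne_zero hp hq), ← sub_eq_zero]
  ring_nf

theorem sq_image_ellipse {p q : ℝ} (hp : 0 < p) (hq : 0 < q) :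
    (fun z : ℂ => z ^ 2) '' {z : ℂ | z.re ^ 2 / p + z.im ^ 2 / q = 1}
      = {w : ℂ | ‖w‖ + ‖w - ((p - q : ℝ) : ℂ)‖ = p + q} := by
  ext w
  simp only [Set.mem_image, Set.mem_ofPred_eq, re_sq_div_add_im_sq_div_eq_one_iff hp.ne' hq.ne']
  constructor
  · rintro ⟨z, hz, rfl⟩
    have hre : z.re ^ 2 ≤ p :=
      le_of_mul_le_mul_left (by nlinarith [mul_nonneg hp.le (sq_nonneg z.im)]) hq
    have him : z.im ^ 2 ≤ q :=
      le_of_mul_le_mul_left (by nlinarith [mul_nonneg hq.le (sq_nonneg z.re)]) hp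
    have hle : ‖z‖ ^ 2 ≤ p + q := by
      rw [Complex.sq_norm, normSq_apply]
      nlinarith
    have hdist : ‖z ^ 2 - ((p - q : ℝ) : ℂ)‖ = p + q - ‖z‖ ^ 2 := by
      rw [← sq_eq_sq₀ (norm_nonneg _) (sub_nonneg.2 hle), norm_sq_sub_ofReal_sq, hz]
      ring
    rw [norm_pow, hdist]
    ring
  · intro hw
    obtain ⟨z, rfl⟩ := IsAlgClosed.exists_pow_nat_eq w two_pos
    refine ⟨z, ?_, rfl⟩
    have hdist : ‖z ^ 2 - ((p - q : ℝ) : ℂ)‖ = p + q - ‖z‖ ^ 2 := by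
      rw [norm_pow] at hw
      linarith
    have hid := norm_sq_sub_ofReal_sq z p q
    rw [hdist] at hid
    linarith

end Complex

theorem hooke_envelope_duality_general
    (c_H R_H β ε : ℝ)
    (p q : ℝ)
    (hp : p = β + (c_H ^ 2 + ε * R_H ^ 2) / 2)
    (hq : q = β + (-c_H ^ 2 + ε * R_H ^ 2) / 2)
    (hqpos : 0 < q) :
    (fun z : ℂ => z ^ 2) '' {z : ℂ | z.re ^ 2 / p + z.im ^ 2 / q = 1}
      = {w : ℂ | ‖w‖ + ‖w - (c_H ^ 2 : ℝ)‖
          = 2 * β + ε * R_H ^ 2} := by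
  have hfocus : c_H ^ 2 = p - q := by rw [hp, hq]; ring
  have haxis : 2 * β + ε * R_H ^ 2 = p + q := by rw [hp, hq]; ring
  have hppos : 0 < p := by nlinarith [sq_nonneg c_H]
  rw [hfocus, haxis]
  exact Complex.sq_image_ellipse hppos hqpos

/-- **Duality of the envelope conics of the Hooke and Kepler billiards.**
Let `c_H, R_H, β > 0`, `ε = ±1`, `p = β + (c_H² + εR_H²)/2`, `q = β + (−c_H² + εR_H²)/2`
with `q > 0`.  Then the image under `z ↦ z²` of the Hooke envelope conic
`E_{Hε} = {z : (Re z)²/p + (Im z)²/q = 1}` equals the Kepler envelope conic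
`{w : |w| + |w − c_H²| = 2β + εR_H²}`, confocal with the Kepler boundary (foci `0` and
`(c_H², 0)`) with semi-major axis `β + εR_H²/2`.  With `β = E/k` this identifies the
envelope curves `E_{H±}` of the Hooke billiard as duals of the Kepler envelopes `E_±`. -/
theorem hooke_envelope_duality
    (c_H R_H β ε : ℝ) (hcH : 0 < c_H) (hRH : 0 < R_H) (hβ : 0 < β)
    (hε : ε = 1 ∨ ε = -1)
    (p q : ℝ)
    (hp : p = β + (c_H ^ 2 + ε * R_H ^ 2) / 2)
    (hq : q = β + (-c_H ^ 2 + ε * R_H ^ 2) / 2)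
    (hqpos : 0 < q) :
    (fun z : ℂ => z ^ 2) '' {z : ℂ | z.re ^ 2 / p + z.im ^ 2 / q = 1}
      = {w : ℂ | ‖w‖ + ‖w - (c_H ^ 2 : ℝ)‖
          = 2 * β + ε * R_H ^ 2} :=
  hooke_envelope_duality_general c_H R_H β ε p q hp hq hqpos
end

section
/- Let β ∈ ℝ and let r : ℝ → ℝ be differentiable with r(φ) > 0 for all φ. Define F(φ) = (r(φ)·cos φ, r(φ)·sin φ) ∈ ℝ², the family of lines d_H(x,y,φ) = x·F_x(φ) + y·F_y(φ) + ½·r(φ)² + β = 0, and set μ(φ) = β/r(φ)² − ½, x(φ) = −μ(φ)·(d/dφ)F_y(φ) − F_x(φ) and y(φ) = μ(φ)·(d/dφ)F_x(φ) − F_y(φ). Then for every φ: (i) d_H(x(φ), y(φ), φ) = 0, and (ii) x(φ)·(d/dφ)F_x(φ) + y(φ)·(d/dφ)F_y(φ) + F_x(φ)·(d/dφ)F_x(φ) + F_y(φ)·(d/dφ)F_y(φ) = 0, i.e. the partial derivative in φ of d_H vanishes at (x(φ), y(φ), φ). (Hence the curve (x(φ), y(φ)) is the envelope of the family of directrices of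 the Hooke flight ellipses; with β = E/k this applies in particular to the Cassini-oval parametrization r(φ)² = c_H²·cos 2φ + √(c_H⁴cos²2φ + R_H⁴ − c_H⁴) for R_H > c_H > 0.) -/
/-- **Envelope of the family of directrices of the Hooke flight ellipses.**
Let `r : ℝ → ℝ` be differentiable and positive, set `F(φ) = (r(φ)cos φ, r(φ)sin φ)`,
consider the family of directrices `d_H(x,y,φ) = x·F_x(φ) + y·F_y(φ) + ½r(φ)² + β = 0`,
and put `μ(φ) = β/r(φ)² − ½`, `X(φ) = −μ(φ)·F_y'(φ) − F_x(φ)`,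
`Y(φ) = μ(φ)·F_x'(φ) − F_y(φ)`.  Then for every `φ`:
(i) `d_H(X(φ), Y(φ), φ) = 0` and (ii) `X(φ)F_x'(φ) + Y(φ)F_y'(φ) + F_x(φ)F_x'(φ)
+ F_y(φ)F_y'(φ) = 0`, i.e. `∂d_H/∂φ` vanishes at `(X(φ), Y(φ), φ)`.  Hence
`(X(φ), Y(φ))` is the envelope of the family of directrices. -/
theorem hooke_directrix_envelope
    (β : ℝ) (r : ℝ → ℝ) (hr : Differentiable ℝ r) (hrpos : ∀ φ, 0 < r φ)
    (Fx Fy μ X Y : ℝ → ℝ)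
    (hFx : ∀ φ, Fx φ = r φ * Real.cos φ)
    (hFy : ∀ φ, Fy φ = r φ * Real.sin φ)
    (hμ : ∀ φ, μ φ = β / (r φ) ^ 2 - 1 / 2)
    (hX : ∀ φ, X φ = -(μ φ) * deriv Fy φ - Fx φ)
    (hY : ∀ φ, Y φ = (μ φ) * deriv Fx φ - Fy φ) :
    ∀ φ : ℝ,
      (X φ * Fx φ + Y φ * Fy φ + (1 / 2) * (r φ) ^ 2 + β = 0) ∧
      (X φ * deriv Fx φ + Y φ * deriv Fy φ
        + Fx φ * deriv Fx φ + Fy φ * deriv Fy φ = 0) := by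
  intro φ
  have hFx' : Fx = fun φ => r φ * Real.cos φ := funext hFx
  have hFy' : Fy = fun φ => r φ * Real.sin φ := funext hFy
  have hdFx : deriv Fx φ = deriv r φ * Real.cos φ - r φ * Real.sin φ := by
    rw [hFx', deriv_fun_mul (hr φ) (Real.differentiable_cos φ), Real.deriv_cos]
    ring
  have hdFy : deriv Fy φ = deriv r φ * Real.sin φ + r φ * Real.cos φ := by
    rw [hFy', deriv_fun_mul (hr φ) (Real.differentiable_sin φ), Real.deriv_sin]
  have hrne : r φ ≠ 0 := (hrpos φ).ne'
  have hcs : Real.cos φ ^ 2 + Real.sin φ ^ 2 = 1 := Real.cos_sq_add_sin_sq φ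
  constructor
  · have hμR : μ φ * r φ ^ 2 = β - (r φ) ^ 2 / 2 := by
      rw [hμ φ]; field_simp
    rw [hX φ, hY φ, hdFx, hdFy, hFx φ, hFy φ]
    linear_combination (-(μ φ + 1) * (r φ) ^ 2) * hcs - hμR
  · rw [hX φ, hY φ]
    ring
end
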